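/- arXiv:1009.0682 — 2 statements merged into one kernel-verified Lean document; each statement's English description precedes it below -/
import Mathlib

section
/- Let L be a finite modular lattice, let C ⊆ L_l be a constant height code with minimum distance D(C) > 2, let w ∈ L with h(w) = h(1) − 1, let L' := [0,w], and let C' be a code punctured from C by w. Then C' is a constant height code with C' ⊆ L'_{l−1}, |C'| = |C|, and D(C') ≥ D(C) − 2. -/
/-- The height of an element: the greatest length of chains from `⊥` to `u`. -/
noncomputable def ht {L : Type*} [Preorder L] (u : L) : ℕ := (Order.height u).toNat

/-- An element `z` is a cycle if the interval `[⊥, z]` is a chain. -/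
def IsCycle {L : Type*} [Lattice L] [BoundedOrder L] (z : L) : Prop :=
  IsChain (· ≤ ·) (Set.Icc (⊥ : L) z)

/-- An element `z` is a dual cycle if the interval `[z, ⊤]` is a chain. -/
def IsDualCycle {L : Type*} [Lattice L] [BoundedOrder L] (z : L) : Prop :=
  IsChain (· ≤ ·) (Set.Icc z (⊤ : L))

/-- A lattice is semi-primary if every element is a join of cycles and a meet of
dual cycles. -/
def IsSemiPrimary (L : Type*) [Lattice L] [BoundedOrder L] : Prop :=
  ∀ u : L, (∃ s : Finset L, (∀ z ∈ s, IsCycle z) ∧ u = s.sup id) ∧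
           (∃ s : Finset L, (∀ z ∈ s, IsDualCycle z) ∧ u = s.inf id)

/-- A finite family of lattice elements is independent. -/
def IndepFun {L : Type*} [Lattice L] [BoundedOrder L] {n : ℕ} (z : Fin n → L) : Prop :=
  ∀ i, ((Finset.univ.erase i).sup z) ⊓ z i = ⊥

/-- A partition is (represented by) a multiset of positive natural numbers. -/
def IsPartition (μ : Multiset ℕ) : Prop := ∀ p ∈ μ, 0 < p

/-- The `i`-th largest part of a partition (0-indexed, 0 if out of range). -/
def partGet (μ : Multiset ℕ) (i : ℕ) : ℕ := ((μ.sort (· ≤ ·)).reverse).getD i 0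

/-- Componentwise order on partitions: `μ ≤ λ` iff `μᵢ ≤ λᵢ` for all `i`. -/
def PartLE (μ lam : Multiset ℕ) : Prop := ∀ i, partGet μ i ≤ partGet lam i

/-- For `λ = (sⁿ)` and `μ ≤ λ`, the partition `λ − μ = (s − μₙ, …, s − μ₁)`. -/
def partSub (s n : ℕ) (μ : Multiset ℕ) : Multiset ℕ :=
  Multiset.filter (fun x => 0 < x)
    (↑((List.range n).map (fun i => s - partGet μ i)) : Multiset ℕ)

/-- `u` has type `μ`: `u` is a join of independent nonzero cycles whose multiset of
heights equals `μ`. -/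
def IsTypeOf {L : Type*} [Lattice L] [BoundedOrder L] (u : L) (μ : Multiset ℕ) : Prop :=
  ∃ (n : ℕ) (z : Fin n → L), (∀ i, IsCycle (z i)) ∧ (∀ i, z i ≠ ⊥) ∧ IndepFun z ∧
    u = Finset.univ.sup z ∧ (↑(List.ofFn (fun i => ht (z i))) : Multiset ℕ) = μ

/-- The lattice metric `d(u,v) = h(u ∨ v) − h(u ∧ v)`. -/
noncomputable def dLat {L : Type*} [Lattice L] (u v : L) : ℕ := ht (u ⊔ v) - ht (u ⊓ v)

/-- The sphere of radius `r` centered at `u`. -/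
def sph {L : Type*} [Lattice L] (u : L) (r : ℕ) : Set L := {v | dLat u v ≤ r}

/-- The `t`-th layer of the sphere of radius `r` centered at `u`. -/
def sphH {L : Type*} [Lattice L] (u : L) (r t : ℕ) : Set L :=
  {v | dLat u v ≤ r ∧ ht v = t}

/-- The elements of type `μ` in the sphere of radius `r` centered at `u`. -/
def sphT {L : Type*} [Lattice L] [BoundedOrder L] (u : L) (r : ℕ) (μ : Multiset ℕ) :
    Set L := {v | dLat u v ≤ r ∧ IsTypeOf v μ}

/-- A finite semi-primary lattice is down-enumerable. -/
def DownEnum (L : Type*) [Lattice L] [BoundedOrder L] : Prop :=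
  ∀ (u v : L) (φ μ : Multiset ℕ), IsTypeOf u φ → IsTypeOf v φ →
    Nat.card {w : L // IsTypeOf w μ ∧ w ≤ u} = Nat.card {w : L // IsTypeOf w μ ∧ w ≤ v}

/-- A finite semi-primary lattice is up-enumerable. -/
def UpEnum (L : Type*) [Lattice L] [BoundedOrder L] : Prop :=
  ∀ (u v : L) (φ μ : Multiset ℕ), IsTypeOf u φ → IsTypeOf v φ →
    Nat.card {w : L // IsTypeOf w μ ∧ u ≤ w} = Nat.card {w : L // IsTypeOf w μ ∧ v ≤ w}

/-- A lattice is enumerable if it is both down- and up-enumerable. -/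
def Enumerable (L : Type*) [Lattice L] [BoundedOrder L] : Prop := DownEnum L ∧ UpEnum L

/-- `α(φ,μ)`: the number of elements of type `μ` below a (any) element of type `φ`. -/
noncomputable def alphaP (L : Type*) [Lattice L] [BoundedOrder L] (φ μ : Multiset ℕ) : ℕ :=
  sSup {n | ∃ u : L, IsTypeOf u φ ∧ n = Nat.card {w : L // IsTypeOf w μ ∧ w ≤ u}}

/-- `β(φ,μ)`: the number of elements of type `μ` above a (any) element of type `φ`. -/
noncomputable def betaP (L : Type*) [Lattice L] [BoundedOrder L] (φ μ : Multiset ℕ) : ℕ :=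
  sSup {n | ∃ u : L, IsTypeOf u φ ∧ n = Nat.card {w : L // IsTypeOf w μ ∧ u ≤ w}}

/-- `α(μ, r₁, …, rₙ)`: the number of chains `x₁ ≤ ⋯ ≤ xₙ ≤ w` with `h(xᵢ) = rᵢ`,
below a (any) element `w` of type `μ`. -/
noncomputable def alphaChain (L : Type*) [Lattice L] [BoundedOrder L] (μ : Multiset ℕ)
    {n : ℕ} (r : Fin n → ℕ) : ℕ :=
  sSup {m | ∃ w : L, IsTypeOf w μ ∧
    m = Nat.card {x : Fin n → L // (∀ i, ht (x i) = r i) ∧ Monotone x ∧ ∀ i, x i ≤ w}}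


/-!
In a finite modular lattice the height is submodular, `h(a ∨ b) + h(a ∧ b) ≤ h(a) + h(b)`.
Hence replacing `u, v` by elements `u' ≤ u`, `v' ≤ v` one step lower raises `h(u ∧ v)` not
at all and lowers `h(u ∨ v)` by at most two, so `d(u', v') ≥ d(u, v) - 2`. For `u' = v'` this forces
`d(u, v) ≤ 2`, so puncturing a code with `D(C) > 2` is injective.
-/

section Height

variable {α : Type*} [Preorder α] [Fintype α]

lemma height_ne_top_of_fintype (x : α) : Order.height x ≠ ⊤ := by
  have h : Order.height x ≤ (Fintype.card α : ℕ∞) :=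
    Order.height_le fun p _ => by exact_mod_cast p.length_lt_card.le
  exact (h.trans_lt (ENat.natCast_lt_top _)).ne

lemma natCast_ht (x : α) : (ht x : ℕ∞) = Order.height x :=
  ENat.natCast_toNat (height_ne_top_of_fintype x)

lemma ht_mono : Monotone (ht : α → ℕ) := fun x y h => by
  exact_mod_cast (natCast_ht x ▸ natCast_ht y ▸ Order.height_mono h)

lemma ht_strictMono : StrictMono (ht : α → ℕ) := fun x y h => by
  exact_mod_cast
    (natCast_ht x ▸ natCast_ht y ▸
      Order.height_strictMono h (height_ne_top_of_fintype x).lt_top)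

end Height

lemma LTSeries.head_add_length_le_of_strictMonoOn {α : Type*} [Preorder α] (p : LTSeries α)
    {g : α → ℕ} {s : Set α} (hg : StrictMonoOn g s) (hp : ∀ i, p i ∈ s) :
    g p.head + p.length ≤ g p.last :=
  LTSeries.head_add_length_le_nat ⟨p.length, g ∘ p, fun i => hg (hp _) (hp _) (p.step i)⟩

lemma dLat_self {L : Type*} [Lattice L] (x : L) : dLat x x = 0 := by
  simp [dLat]

section Modular

variable {L : Type*} [Lattice L] [IsModularLattice L] [Fintype L]

/-- If neither summand grows from `x < y`, modularity (first over `b`, then over `a`)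
gives `x = y`. -/
lemma strictMonoOn_ht_inf_add_ht_sup_inf (a b : L) :
    StrictMonoOn (fun x => ht (x ⊓ a) + ht ((x ⊔ a) ⊓ b)) (Set.Iic (a ⊔ b)) := by
  intro x _ y hy hxy
  have hinf : x ⊓ a ≤ y ⊓ a := inf_le_inf_right a hxy.le
  have hsup : (x ⊔ a) ⊓ b ≤ (y ⊔ a) ⊓ b := inf_le_inf_right b (sup_le_sup_right hxy.le a)
  rcases hinf.lt_or_eq with hinf | hinf_eq
  · exact Nat.add_lt_add_of_lt_of_le (ht_strictMono hinf) (ht_mono hsup)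
  rcases hsup.lt_or_eq with hsup | hsup_eq
  · exact Nat.add_lt_add_of_le_of_lt (ht_mono hinf) (ht_strictMono hsup)
  have hsup_a : x ⊔ a = y ⊔ a := by
    refine eq_of_le_of_inf_le_of_sup_le (sup_le_sup_right hxy.le a) hsup_eq.ge ?_
    calc y ⊔ a ⊔ b ≤ a ⊔ b := sup_le (sup_le hy le_sup_left) le_sup_right
      _ ≤ x ⊔ a ⊔ b := sup_le_sup_right le_sup_right b
  exact absurd (eq_of_le_of_inf_le_of_sup_le hxy.le hinf_eq.ge hsup_a.ge) hxy.ne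

lemma ht_sup_add_ht_inf_le (a b : L) : ht (a ⊔ b) + ht (a ⊓ b) ≤ ht a + ht b := by
  obtain ⟨p, hlast, hlen⟩ :=
    Order.exists_series_of_height_eq_coe (a ⊔ b) (natCast_ht (a ⊔ b)).symm
  have hchain := p.head_add_length_le_of_strictMonoOn
    (strictMonoOn_ht_inf_add_ht_sup_inf a b) fun i => hlast ▸ p.monotone (Fin.le_last i)
  have hhead : ht (a ⊓ b) ≤ ht ((p.head ⊔ a) ⊓ b) := ht_mono (inf_le_inf_right b le_sup_right)
  have hlast_a : (a ⊔ b) ⊓ a = a := inf_eq_right.2 le_sup_left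
  have hlast_b : (a ⊔ b ⊔ a) ⊓ b = b := inf_eq_right.2 (le_sup_right.trans le_sup_left)
  rw [hlast, hlen, hlast_a, hlast_b] at hchain
  omega

lemma ht_sup_add_ht_le_of_le {x v : L} (u : L) (hxv : x ≤ v) :
    ht (u ⊔ v) + ht x ≤ ht (u ⊔ x) + ht v := by
  have hsub := ht_sup_add_ht_inf_le (u ⊔ x) v
  rw [sup_assoc, sup_eq_right.2 hxv] at hsub
  have hx : ht x ≤ ht ((u ⊔ x) ⊓ v) := ht_mono (le_inf le_sup_right hxv)
  omega

lemma dLat_add_ht_add_ht_le {x y u v : L} (hxu : x ≤ u) (hyv : y ≤ v) :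
    dLat u v + ht x + ht y ≤ dLat x y + ht u + ht v := by
  have hv := ht_sup_add_ht_le_of_le u hyv
  have hu := ht_sup_add_ht_le_of_le y hxu
  rw [sup_comm y u, sup_comm y x] at hu
  have hinf : ht (x ⊓ y) ≤ ht (u ⊓ v) := ht_mono (inf_le_inf hxu hyv)
  have huv : ht (u ⊓ v) ≤ ht (u ⊔ v) := ht_mono inf_le_sup
  unfold dLat
  omega

end Modular

theorem stmt18_general {L : Type*} [Lattice L] [IsModularLattice L] [Fintype L]
    (l : ℕ) (C : Set L) (hC : C ⊆ {v : L | ht v = l})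
    (hD2 : ∀ u ∈ C, ∀ v ∈ C, u ≠ v → 2 < dLat u v)
    (w : L)
    (f : L → L) (hf : ∀ v ∈ C, f v ≤ v ⊓ w ∧ ht (f v) = l - 1)
    (C' : Set L) (hC' : C' = f '' C) :
    C' ⊆ {x : L | x ≤ w ∧ ht x = l - 1} ∧
    C'.ncard = C.ncard ∧
    (∀ D : ℕ, (∀ u ∈ C, ∀ v ∈ C, u ≠ v → D ≤ dLat u v) →
      ∀ u' ∈ C', ∀ v' ∈ C', u' ≠ v' → D - 2 ≤ dLat u' v') := by
  subst hC'
  have hdist : ∀ u ∈ C, ∀ v ∈ C, dLat u v ≤ dLat (f u) (f v) + 2 := fun u hu v hv => by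
    have := dLat_add_ht_add_ht_le ((hf u hu).1.trans inf_le_left) ((hf v hv).1.trans inf_le_left)
    rw [(hf u hu).2, (hf v hv).2, hC hu, hC hv] at this
    omega
  refine ⟨?_, Set.InjOn.ncard_image fun u hu v hv huv => ?_, ?_⟩
  · rintro _ ⟨v, hv, rfl⟩
    exact ⟨(hf v hv).1.trans inf_le_right, (hf v hv).2⟩
  · by_contra hne
    have := hdist u hu v hv
    rw [huv, dLat_self] at this
    exact absurd (hD2 u hu v hv hne) (by omega)
  · rintro D hD _ ⟨u, hu, rfl⟩ _ ⟨v, hv, rfl⟩ hne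
    have := hD u hu v hv (ne_of_apply_ne f hne)
    have := hdist u hu v hv
    omega

/-- Puncturing in a finite modular lattice: let `C ⊆ L_l` be a
constant height code with minimum distance `D(C) > 2`, let `w` have height `h(1) − 1`,
and let `C'` be obtained from `C` by replacing each `v ∈ C` by some `f v ≤ v ∧ w` of
height `l − 1`. Then `C' ⊆ L'_{l−1}` (where `L' = [0,w]`), `|C'| = |C|`, and
`D(C') ≥ D(C) − 2` (for every lower bound `D` on the minimum distance of `C`,
`D − 2` is a lower bound on the minimum distance of `C'`). -/
theorem stmt18 {L : Type*} [Lattice L] [IsModularLattice L] [BoundedOrder L] [Fintype L]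
    (l : ℕ) (C : Set L) (hC : C ⊆ {v : L | ht v = l})
    (hD2 : ∀ u ∈ C, ∀ v ∈ C, u ≠ v → 2 < dLat u v)
    (w : L) (hw : ht w = ht (⊤ : L) - 1)
    (f : L → L) (hf : ∀ v ∈ C, f v ≤ v ⊓ w ∧ ht (f v) = l - 1)
    (C' : Set L) (hC' : C' = f '' C) :
    C' ⊆ {x : L | x ≤ w ∧ ht x = l - 1} ∧
    C'.ncard = C.ncard ∧
    (∀ D : ℕ, (∀ u ∈ C, ∀ v ∈ C, u ≠ v → D ≤ dLat u v) →
      ∀ u' ∈ C', ∀ v' ∈ C', u' ≠ v' → D - 2 ≤ dLat u' v') :=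
  stmt18_general l C hC hD2 w f hf C' hC'
end

section
/- Let L be a finite modular lattice, let C ⊆ L_l be a constant height code with |C| ≥ 2 whose minimum distance D(C) is even with D(C) ≥ 2, let t := (D(C)−2)/2, let w ∈ L with h(w) = h(1) − t, and let L' := [0,w]. Then |C| ≤ |L'_{l−t}|. -/
section helpers
variable {L : Type*} [Lattice L] [Fintype L]

lemma height_ne_top (x : L) : Order.height x ≠ ⊤ := by
  have h : Order.height x ≤ (Fintype.card L : ℕ∞) := by
    apply Order.height_le
    intro p _
    exact_mod_cast p.length_lt_card.le
  exact (h.trans_lt (ENat.coe_lt_top _)).ne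

lemma ht_coe (x : L) : (ht x : ℕ∞) = Order.height x := ENat.coe_toNat (height_ne_top x)

lemma ht_mono_s19 {x y : L} (h : x ≤ y) : ht x ≤ ht y := by
  have := Order.height_mono h
  rw [← ht_coe, ← ht_coe] at this
  exact_mod_cast this

lemma ht_strict {x y : L} (h : x < y) : ht x < ht y := by
  have := Order.height_strictMono h ((height_ne_top x).lt_top)
  rw [← ht_coe, ← ht_coe] at this
  exact_mod_cast this

lemma eq_of_le_of_ht_le {x y : L} (h : x ≤ y) (h2 : ht y ≤ ht x) : x = y := by
  rcases h.lt_or_eq with h' | h'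
  · exact absurd (ht_strict h') (by omega)
  · exact h'

lemma exists_le_ht (x : L) (k : ℕ) (hk : k ≤ ht x) : ∃ y, y ≤ x ∧ ht y = k := by
  obtain ⟨p, hlast, hlen⟩ := Order.exists_series_of_height_eq_coe x (ht_coe x).symm
  refine ⟨p ⟨k, by omega⟩, ?_, ?_⟩
  · have : p ⟨k, by omega⟩ ≤ p (Fin.last p.length) := p.monotone (by simp [Fin.le_def]; omega)
    rwa [show p (Fin.last p.length) = x from hlast] at this
  · have := Order.height_eq_index_of_length_eq_height_last
      (p := p) (by rw [hlast, ← ht_coe, hlen]) ⟨k, by omega⟩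
    have h2 : (ht (p ⟨k, by omega⟩) : ℕ∞) = (k : ℕ∞) := by
      rw [ht_coe, this]
    exact_mod_cast h2
end helpers

section modular
variable {L : Type*} [Lattice L] [Fintype L] [IsModularLattice L]

lemma ht_covBy_aux : ∀ (n : ℕ) (x y : L), ht x = n → y ⋖ x → ht x = ht y + 1 := by
  intro n
  induction n using Nat.strong_induction_on with
  | _ n ih =>
    intro x y hn hyx
    have hlt : ht y < ht x := ht_strict hyx.lt
    obtain ⟨z, hzle, hz⟩ := exists_le_ht x (ht x - 1) (by omega)
    have hzx : z < x := lt_of_le_of_ne hzle (by intro h; rw [h] at hz; omega)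
    have hzcov : z ⋖ x :=
      ⟨hzx, by
        intro w h1 h2
        have g1 := ht_strict h1
        have g2 := ht_strict h2
        omega⟩
    by_cases hyz : y = z
    · subst hyz; omega
    · have hsup : y ⊔ z = x := by
        have hzy : ¬ z ≤ y := by
          intro hle
          rcases hle.lt_or_eq with h' | h'
          · exact hzcov.2 h' hyx.lt
          · exact hyz h'.symm
        have h1 : y < y ⊔ z := lt_of_le_of_ne le_sup_left (fun h => hzy (h ▸ le_sup_right))
        have h2 : y ⊔ z ≤ x := sup_le hyx.lt.le hzx.le
        rcases h2.lt_or_eq with h' | h'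
        · exact absurd h' (hyx.2 h1)
        · exact h'
      have hy' : y ⋖ y ⊔ z := hsup ▸ hyx
      have hz' : z ⋖ y ⊔ z := hsup ▸ hzcov
      have h1 : y ⊓ z ⋖ z := inf_covBy_of_covBy_sup_of_covBy_sup_right hy' hz'
      have h2 : y ⊓ z ⋖ y := inf_covBy_of_covBy_sup_of_covBy_sup_left hy' hz'
      have hz1 : ht z = ht (y ⊓ z) + 1 := ih (ht z) (by omega) z (y ⊓ z) rfl h1
      have h3 : ht (y ⊓ z) < ht y := ht_strict h2.lt
      omega

lemma ht_covBy' {x y : L} (h : y ⋖ x) : ht x = ht y + 1 := ht_covBy_aux (ht x) x y rfl h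

lemma ht_modular_aux : ∀ (k : ℕ) (a b : L), ht a - ht (a ⊓ b) ≤ k →
    ht (a ⊔ b) + ht (a ⊓ b) = ht a + ht b := by
  intro k
  induction k with
  | zero =>
    intro a b h
    have h2 : a ⊓ b = a := eq_of_le_of_ht_le inf_le_left (by omega)
    have h3 : a ≤ b := h2 ▸ inf_le_right
    rw [h2, sup_eq_right.mpr h3]; omega
  | succ k ih =>
    intro a b h
    by_cases hab : a ⊓ b = a
    · have h3 : a ≤ b := hab ▸ inf_le_right
      rw [hab, sup_eq_right.mpr h3]; omega
    · have hlt : a ⊓ b < a := lt_of_le_of_ne inf_le_left hab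
      obtain ⟨c, hcov, hca⟩ := exists_covBy_le_of_lt hlt
      have hbc : b ⊓ c = a ⊓ b :=
        le_antisymm (le_inf (inf_le_right.trans hca) inf_le_left)
          (le_inf inf_le_right hcov.lt.le)
      -- b ⋖ b ⊔ c  (upper modularity)
      have hcovb : b ⋖ c ⊔ b := covBy_sup_of_inf_covBy_left (a := c) (b := b)
        (by rw [inf_comm, hbc]; exact hcov)
      -- a ⊓ (b ⊔ c) = c
      have hac : a ⊓ (b ⊔ c) = c := by
        rw [inf_comm, sup_comm, sup_inf_assoc_of_le b hca, inf_comm b a]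
        exact sup_eq_left.mpr hcov.lt.le
      have hsup : a ⊔ (b ⊔ c) = a ⊔ b := by
        rw [sup_comm b c, ← sup_assoc, sup_eq_left.mpr hca]
      have hhc : ht c = ht (a ⊓ b) + 1 := ht_covBy' hcov
      have hhbc : ht (b ⊔ c) = ht b + 1 := by
        rw [sup_comm]; exact ht_covBy' hcovb
      have := ih a (b ⊔ c) (by rw [hac]; omega)
      rw [hac, hsup, hhbc] at this
      omega

lemma ht_modular (a b : L) : ht (a ⊔ b) + ht (a ⊓ b) = ht a + ht b :=
  ht_modular_aux (ht a - ht (a ⊓ b)) a b le_rfl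

end modular

/-- Singleton bound in a finite modular lattice: let `C ⊆ L_l` be a
constant height code with `|C| ≥ 2` whose minimum distance `D(C)` is even with
`D(C) ≥ 2`, let `t := (D(C) − 2)/2`, and let `w` have height `h(1) − t`. Then
`|C| ≤ |L'_{l−t}|` where `L' = [0,w]`. -/
theorem stmt19 {L : Type*} [Lattice L] [IsModularLattice L] [BoundedOrder L] [Fintype L]
    (l : ℕ) (C : Set L) (hC : C ⊆ {v : L | ht v = l}) (hcard : 2 ≤ C.ncard)
    (DC : ℕ) (hDC : DC = sInf {n : ℕ | ∃ u ∈ C, ∃ v ∈ C, u ≠ v ∧ n = dLat u v})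
    (heven : Even DC) (hge : 2 ≤ DC)
    (t : ℕ) (htt : t = (DC - 2) / 2)
    (w : L) (hw : ht w = ht (⊤ : L) - t) :
    C.ncard ≤ {x : L | x ≤ w ∧ ht x = l - t}.ncard := by
  have hDC2 : DC = 2 * t + 2 := by
    obtain ⟨m, hm⟩ := heven
    omega
  have key : ∀ u ∈ C, ∀ v ∈ C, u ≠ v → 2 * t + 2 ≤ ht (u ⊔ v) - ht (u ⊓ v) := by
    intro u hu v hv huv
    have : DC ≤ dLat u v := by
      rw [hDC]
      exact Nat.sInf_le ⟨u, hu, v, hv, huv, rfl⟩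
    rw [hDC2] at this
    simpa [dLat] using this
  -- t < l
  obtain ⟨u₀, v₀, hu₀, hv₀, huv₀⟩ := (Set.one_lt_ncard_iff (Set.toFinite C)).mp (by omega)
  have htl : t < l := by
    have e := ht_modular u₀ v₀
    have h1 : ht u₀ = l := hC hu₀
    have h2 : ht v₀ = l := hC hv₀
    have h3 := key u₀ hu₀ v₀ hv₀ huv₀
    omega
  have htop : ∀ x : L, ht x ≤ ht (⊤ : L) := fun x => ht_mono_s19 le_top
  have hex : ∀ u ∈ C, ∃ y, y ≤ u ⊓ w ∧ ht y = l - t := by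
    intro u hu
    apply exists_le_ht
    have e := ht_modular u w
    have h1 : ht u = l := hC hu
    have h2 := htop (u ⊔ w)
    omega
  choose! f hf1 hf2 using hex
  apply Set.ncard_le_ncard_of_injOn f
  · intro u hu
    exact ⟨(hf1 u hu).trans inf_le_right, hf2 u hu⟩
  · intro u hu v hv hfe
    by_contra huv
    have h3 := key u hu v hv huv
    have h1 : ht u = l := hC hu
    have h2 : ht v = l := hC hv
    have e := ht_modular u v
    have hle : f u ≤ u ⊓ v :=
      le_inf ((hf1 u hu).trans inf_le_left) (hfe ▸ (hf1 v hv).trans inf_le_left)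
    have h4 : l - t ≤ ht (u ⊓ v) := (hf2 u hu) ▸ ht_mono_s19 hle
    omega
end
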